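/- A commutative cu-uniserial ring that is Noetherian and reduced (nonsingular) is a principal ideal domain. -/

import Mathlib

/-- The radical of a module: intersection of all maximal submodules. -/
def ModRadical (R M : Type*) [Ring R] [AddCommGroup M] [Module R M] : Submodule R M :=
  sInf {N : Submodule R M | IsCoatom N}

/-- A module is cyclic if it is generated by one element. -/
def IsCyclicMod (R M : Type*) [Ring R] [AddCommGroup M] [Module R M] : Prop :=
  ∃ x : M, Submodule.span R {x} = ⊤

/-- A module is uniform if it is nonzero and any two nonzero submodules intersect nontrivially. -/
def IsUniformMod (R M : Type*) [Ring R] [AddCommGroup M] [Module R M] : Prop :=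
  Nontrivial M ∧ ∀ A B : Submodule R M, A ≠ ⊥ → B ≠ ⊥ → A ⊓ B ≠ ⊥

/-- A module is cyclic-uniform uniserial (cu-uniserial) if it is nonzero and for every
nonzero finitely generated submodule `K`, the quotient `K / Rad K` is cyclic and uniform. -/
def IsCUUniserial (R M : Type*) [Ring R] [AddCommGroup M] [Module R M] : Prop :=
  Nontrivial M ∧ ∀ K : Submodule R M, K ≠ ⊥ → K.FG →
    IsCyclicMod R (↥K ⧸ ModRadical R ↥K) ∧ IsUniformMod R (↥K ⧸ ModRadical R ↥K)

/-!
Over a cu-uniserial module `M` the radical is superfluous in every finitely generated submodule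
`K`, so properties of `K / Rad K` lift to `K`: cyclicity lifts directly, and a splitting
`K = A ⊕ B` descends to `K / Rad K` because the projection onto `A` preserves the radical. Hence
every finitely generated submodule is cyclic, and `M` is uniform (two independent cyclic
submodules would split their sum). For `M = R` uniformity means every nonzero ideal is essential,
so a nonzero `a` with `a * b = 0` makes `ann b` essential, and nonsingularity forces `b = 0`.

`ModRadical` is by definition Mathlib's `Module.jacobson`, so the lemmas below are stated for the
latter.
-/

open Submodule

namespace Module

variable {R M : Type*} [Ring R] [AddCommGroup M] [Module R M]

theorem eq_top_of_sup_jacobson_eq_top [IsCoatomic (Submodule R M)] {N : Submodule R M}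
    (h : N ⊔ jacobson R M = ⊤) : N = ⊤ := by
  refine (eq_top_or_exists_le_coatom N).resolve_right ?_
  rintro ⟨C, hC, hNC⟩
  exact hC.1 (top_le_iff.mp (h ▸ sup_le hNC (sInf_le hC)))

theorem eq_bot_of_isCompl_of_le_jacobson [IsCoatomic (Submodule R M)] {A B : Submodule R M}
    (hAB : IsCompl A B) (hA : A ≤ jacobson R M) : A = ⊥ := by
  have hB : B = ⊤ := eq_top_of_sup_jacobson_eq_top <| top_unique <|
    hAB.sup_eq_top ▸ sup_comm B A ▸ sup_le_sup_left hA B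
  simpa [hB] using hAB.inf_eq_bot

theorem disjoint_map_mkQ_jacobson_of_isCompl {A B : Submodule R M} (hAB : IsCompl A B) :
    Disjoint (A.map (jacobson R M).mkQ) (B.map (jacobson R M).mkQ) := by
  rw [disjoint_iff, eq_bot_iff]
  rintro _ ⟨⟨x, hx, rfl⟩, y, hy, hxy⟩
  have hyx : y - x ∈ jacobson R M := (Submodule.Quotient.eq _).mp hxy
  have hproj : A.projection B hAB (y - x) = -x := by
    rw [map_sub, projection_apply_of_mem_left hAB hx, projection_apply_of_mem_right hAB hy,
      zero_sub]
  have hx' : -x ∈ jacobson R M := hproj ▸ map_jacobson_le _ (mem_map_of_mem hyx)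
  simpa using neg_mem_iff.mp hx'

theorem eq_bot_or_eq_bot_of_isCompl_of_isUniformMod [IsCoatomic (Submodule R M)]
    (h : IsUniformMod R (M ⧸ jacobson R M)) {A B : Submodule R M} (hAB : IsCompl A B) :
    A = ⊥ ∨ B = ⊥ := by
  by_contra! hne
  refine h.2 _ _ ?_ ?_ (disjoint_map_mkQ_jacobson_of_isCompl hAB).eq_bot
  · rw [ne_eq, ← LinearMap.le_ker_iff_map, ker_mkQ]
    exact fun hA => hne.1 (eq_bot_of_isCompl_of_le_jacobson hAB hA)
  · rw [ne_eq, ← LinearMap.le_ker_iff_map, ker_mkQ]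
    exact fun hB => hne.2 (eq_bot_of_isCompl_of_le_jacobson hAB.symm hB)

theorem isCyclicMod_of_isCyclicMod_quotient_jacobson [IsCoatomic (Submodule R M)]
    (h : IsCyclicMod R (M ⧸ jacobson R M)) : IsCyclicMod R M := by
  obtain ⟨x', hx'⟩ := h
  obtain ⟨x, rfl⟩ := (jacobson R M).mkQ_surjective x'
  refine ⟨x, eq_top_of_sup_jacobson_eq_top ?_⟩
  have := congrArg (comap (jacobson R M).mkQ) hx'
  rwa [← Set.image_singleton, ← map_span, comap_map_mkQ, comap_top, sup_comm] at this

end Module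

namespace Submodule

variable {R M : Type*} [Ring R] [AddCommGroup M] [Module R M]

theorem isCompl_comap_subtype_sup {A B : Submodule R M} (h : Disjoint A B) :
    IsCompl (A.comap (A ⊔ B).subtype) (B.comap (A ⊔ B).subtype) := by
  constructor
  · rw [disjoint_iff, ← comap_inf, h.eq_bot, comap_bot, ker_subtype]
  · rw [codisjoint_iff]
    apply map_injective_of_injective (A ⊔ B).injective_subtype
    rw [map_sup, map_comap_subtype, map_comap_subtype, map_subtype_top,
      inf_of_le_right le_sup_left, inf_of_le_right le_sup_right]

theorem isPrincipal_of_isCyclicMod {K : Submodule R M} (h : IsCyclicMod R K) : K.IsPrincipal := by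
  obtain ⟨x, hx⟩ := h
  refine ⟨x, ?_⟩
  simpa [map_span] using (congrArg (map K.subtype) hx).symm

end Submodule

namespace IsCUUniserial

variable {R M : Type*} [Ring R] [AddCommGroup M] [Module R M]

theorem isUniformMod (h : IsCUUniserial R M) : IsUniformMod R M := by
  refine ⟨h.1, fun A B hA hB hAB => ?_⟩
  obtain ⟨a, haA, ha⟩ := exists_mem_ne_zero_of_ne_bot hA
  obtain ⟨b, hbB, hb⟩ := exists_mem_ne_zero_of_ne_bot hB
  set K := span R {a} ⊔ span R {b}
  have hKfg : K.FG := (fg_span_singleton a).sup (fg_span_singleton b)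
  have : Module.Finite R K := Module.Finite.iff_fg.mpr hKfg
  have hK : K ≠ ⊥ := fun hK =>
    ha ((mem_bot R).mp (hK ▸ mem_sup_left (mem_span_singleton_self a)))
  have hdisj : Disjoint (span R {a}) (span R {b}) :=
    (disjoint_iff.mpr hAB).mono ((span_singleton_le_iff_mem a A).mpr haA)
      ((span_singleton_le_iff_mem b B).mpr hbB)
  rcases Module.eq_bot_or_eq_bot_of_isCompl_of_isUniformMod (h.2 K hK hKfg).2
    (isCompl_comap_subtype_sup hdisj) with h' | h' <;> rw [← disjoint_iff_comap_eq_bot] at h'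
  · exact ha (span_singleton_eq_bot.mp (disjoint_self.mp (h'.mono_left le_sup_left)))
  · exact hb (span_singleton_eq_bot.mp (disjoint_self.mp (h'.mono_left le_sup_right)))

theorem isPrincipal_of_fg (h : IsCUUniserial R M) {K : Submodule R M} (hK : K.FG) :
    K.IsPrincipal := by
  rcases eq_or_ne K ⊥ with rfl | hK₀
  · exact bot_isPrincipal
  have : Module.Finite R K := Module.Finite.iff_fg.mpr hK
  exact isPrincipal_of_isCyclicMod
    (Module.isCyclicMod_of_isCyclicMod_quotient_jacobson (h.2 K hK₀ hK).1)

end IsCUUniserial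

theorem IsUniformMod.isDomain {R : Type*} [CommRing R] (hu : IsUniformMod R R)
    (hns : ∀ r : R,
      (∀ I : Ideal R, I ≠ ⊥ → LinearMap.ker (LinearMap.toSpanSingleton R R r) ⊓ I ≠ ⊥) →
      r = 0) :
    IsDomain R := by
  have : Nontrivial R := hu.1
  have : NoZeroDivisors R := by
    refine ⟨fun {a b} hab => or_iff_not_imp_left.mpr fun ha => hns b fun I hI => ?_⟩
    have hker : Ideal.span {a} ≤ LinearMap.ker (LinearMap.toSpanSingleton R R b) := by
      simpa [Ideal.span_le, mul_comm] using hab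
    exact fun hbot =>
      hu.2 _ I (by simpa using ha) hI (le_bot_iff.mp (hbot ▸ inf_le_inf_right I hker))
  exact NoZeroDivisors.to_isDomain R

theorem stmt8 {R : Type*} [CommRing R] [IsNoetherianRing R]
    (h : IsCUUniserial R R)
    (hns : ∀ r : R,
      (∀ I : Ideal R, I ≠ ⊥ → LinearMap.ker (LinearMap.toSpanSingleton R R r) ⊓ I ≠ ⊥) →
      r = 0) :
    IsDomain R ∧ IsPrincipalIdealRing R :=
  ⟨h.isUniformMod.isDomain hns, ⟨fun I => h.isPrincipal_of_fg (IsNoetherian.noetherian I)⟩⟩
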